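/- Let k ≥ 3, a ≥ 1, and i ∈ ℕ, and set B = (a+ki . k+ki). Then C_B^{(k)}(y) = y^{a+ki} · (H_{k−1}(y))^{i+1} · ( y^{k−1} + [a > k]·G_{k−1}(y) ) as formal power series over ℚ, where [a > k] is 1 if a > k and 0 otherwise. -/

import Mathlib

/-- Image of a single letter `m = k*i + j` under the k-Bonacci morphism `φ_k` over ℕ:
`φ_k(ki+j) = (ki)(ki+j+1)` for `0 ≤ j ≤ k-2`, and `φ_k(ki+(k-1)) = ki+k`. -/
def phiLetter (k m : ℕ) : List ℕ :=
  if m % k = k - 1 then [m + 1] else [k * (m / k), m + 1]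

/-- The morphism `φ_k`, extended to words by concatenation. -/
def phi (k : ℕ) (w : List ℕ) : List ℕ := (w.map (phiLetter k)).flatten

/-- `W k n = φ_k^n(0)`, the n-th iterate of `φ_k` applied to the one-letter word `0`. -/
def W (k n : ℕ) : List ℕ := (phi k)^[n] [0]

/-- `shift n w = n ⊕ w`, adding `n` to every letter. -/
def shift (n : ℕ) (w : List ℕ) : List ℕ := w.map (· + n)

/-- `occ B w = |w|_B`, the number of (possibly overlapping) occurrences of `B`
as a factor of `w`, i.e. the number of positions `i` at which `B` is a prefix
of the suffix of `w` starting at `i`. -/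
def occ (B w : List ℕ) : ℕ :=
  ((List.range (w.length + 1)).filter (fun i => decide (B <+: w.drop i))).length


lemma occ_nil (B : List ℕ) (hB : B ≠ []) : occ B [] = 0 := by
  simp [occ, hB]

lemma occ_cons (B : List ℕ) (c : ℕ) (w : List ℕ) :
    occ B (c :: w) = (if B <+: c :: w then 1 else 0) + occ B w := by
  unfold occ
  have h1 : (c :: w).length + 1 = (w.length + 1) + 1 := by simp
  rw [h1, List.range_succ_eq_map, List.filter_cons]
  have h2 : (List.map Nat.succ (List.range (w.length + 1))).filter
      (fun i => decide (B <+: (c :: w).drop i)) =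
      ((List.range (w.length + 1)).filter (fun i => decide (B <+: w.drop i))).map Nat.succ := by
    rw [List.filter_map]
    rfl
  rw [h2]
  by_cases h : B <+: c :: w <;> simp [h, Nat.add_comm]

lemma singleton_prefix_iff (y : ℕ) (w : List ℕ) : [y] <+: w ↔ w.head? = some y := by
  cases w with
  | nil => simp
  | cons d t => simp [List.cons_prefix_cons, eq_comm]

lemma pair_prefix_iff (x y c : ℕ) (w : List ℕ) :
    [x, y] <+: c :: w ↔ x = c ∧ w.head? = some y := by
  rw [List.cons_prefix_cons, singleton_prefix_iff]

lemma occ_pair_singleton (x y c : ℕ) : occ [x, y] [c] = 0 := by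
  rw [occ_cons, occ_nil _ (by simp)]
  simp [pair_prefix_iff]

lemma occ_append (x y : ℕ) (u v : List ℕ) :
    occ [x, y] (u ++ v) = occ [x, y] u + occ [x, y] v +
      (if u.getLast? = some x ∧ v.head? = some y then 1 else 0) := by
  induction u with
  | nil => simp [occ_nil]
  | cons c u ih =>
      rw [List.cons_append, occ_cons, ih, occ_cons (w := u)]
      cases u with
      | nil =>
          simp only [List.nil_append, pair_prefix_iff]
          rcases v with _ | ⟨d, t⟩ <;> simp [eq_comm] <;> split_ifs <;> omega
      | cons e u' =>
          simp only [List.cons_append, pair_prefix_iff, List.head?_cons, List.getLast?_cons_cons]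
          split_ifs <;> simp_all <;> omega

lemma shift_cons (k c : ℕ) (w : List ℕ) : shift k (c :: w) = (c + k) :: shift k w := rfl

lemma head?_shift (k : ℕ) (w : List ℕ) : (shift k w).head? = w.head?.map (· + k) := by
  cases w <;> rfl

lemma occ_shift (k x y : ℕ) (w : List ℕ) :
    occ [x + k, y + k] (shift k w) = occ [x, y] w := by
  induction w with
  | nil => simp [shift, occ_nil]
  | cons c w ih =>
      rw [shift_cons, occ_cons, occ_cons, ih]
      congr 1
      simp only [pair_prefix_iff, head?_shift]
      rcases w with _ | ⟨d, t⟩ <;> simp <;> omega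

lemma occ_shift_left_lt (k x y : ℕ) (w : List ℕ) (hx : x < k) :
    occ [x, y] (shift k w) = 0 := by
  induction w with
  | nil => simp [shift, occ_nil]
  | cons c w ih =>
      rw [shift_cons, occ_cons, ih]
      have : ¬ ([x, y] <+: (c + k) :: shift k w) := by
        rw [pair_prefix_iff]; rintro ⟨h, -⟩; omega
      simp [this]

lemma phi_append (k : ℕ) (u v : List ℕ) : phi k (u ++ v) = phi k u ++ phi k v := by
  simp [phi]

lemma phi_iterate_append (k n : ℕ) (u v : List ℕ) :
    (phi k)^[n] (u ++ v) = (phi k)^[n] u ++ (phi k)^[n] v := by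
  induction n generalizing u v with
  | zero => simp
  | succ n ih => rw [Function.iterate_succ_apply, Function.iterate_succ_apply,
      Function.iterate_succ_apply, phi_append, ih]

lemma phiLetter_shift (k m : ℕ) (hk : 0 < k) :
    phiLetter k (m + k) = shift k (phiLetter k m) := by
  unfold phiLetter
  rw [Nat.add_mod_right, Nat.add_div_right _ hk]
  split_ifs <;> simp [shift, Nat.mul_add, Nat.mul_succ] <;> ring_nf

lemma phi_shift (k : ℕ) (hk : 0 < k) (w : List ℕ) :
    phi k (shift k w) = shift k (phi k w) := by
  induction w with
  | nil => rfl
  | cons c w ih =>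
      have h1 : phi k (c :: w) = phiLetter k c ++ phi k w := by simp [phi]
      have h2 : phi k ((c + k) :: shift k w) = phiLetter k (c + k) ++ phi k (shift k w) := by
        simp [phi]
      rw [shift_cons, h2, ih, h1, phiLetter_shift k c hk]
      simp [shift]

lemma phi_iterate_shift (k n : ℕ) (hk : 0 < k) (w : List ℕ) :
    (phi k)^[n] (shift k w) = shift k ((phi k)^[n] w) := by
  induction n generalizing w with
  | zero => simp
  | succ n ih => rw [Function.iterate_succ_apply, Function.iterate_succ_apply, phi_shift k hk, ih]

lemma W_succ (k n : ℕ) : W k (n + 1) = phi k (W k n) := by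
  simp [W, Function.iterate_succ_apply']

lemma phiLetter_zero (k : ℕ) (hk : 3 ≤ k) : phiLetter k 0 = [0, 1] := by
  unfold phiLetter
  rw [Nat.zero_mod, Nat.zero_div, Nat.mul_zero]
  rw [if_neg (by omega)]

lemma W_head (k : ℕ) (hk : 3 ≤ k) (n : ℕ) : ∃ t, W k n = 0 :: t := by
  induction n with
  | zero => exact ⟨[], rfl⟩
  | succ n ih =>
      obtain ⟨t, ht⟩ := ih
      refine ⟨1 :: phi k t, ?_⟩
      rw [W_succ, ht]
      have : phi k (0 :: t) = phiLetter k 0 ++ phi k t := by simp [phi]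
      rw [this, phiLetter_zero k hk]
      rfl

lemma W_last (k : ℕ) (n : ℕ) : ∃ t, W k n = t ++ [n] := by
  induction n with
  | zero => exact ⟨[], rfl⟩
  | succ n ih =>
      obtain ⟨t, ht⟩ := ih
      rw [W_succ, ht, phi_append]
      have : phi k [n] = phiLetter k n := by simp [phi]
      rw [this]
      unfold phiLetter
      split_ifs
      · exact ⟨phi k t, rfl⟩
      · exact ⟨phi k t ++ [k * (n / k)], by simp⟩

lemma getLast?_phiLetter (k m : ℕ) : (phiLetter k m).getLast? = some (m + 1) := by
  unfold phiLetter; split_ifs <;> rfl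

lemma occ00_phi (k : ℕ) (w : List ℕ) : occ [0, 0] (phi k w) = 0 := by
  induction w with
  | nil => simp [phi, occ_nil]
  | cons c w ih =>
      have h1 : phi k (c :: w) = phiLetter k c ++ phi k w := by simp [phi]
      rw [h1, occ_append, ih, getLast?_phiLetter]
      have h2 : occ [0, 0] (phiLetter k c) = 0 := by
        unfold phiLetter
        split_ifs
        · exact occ_pair_singleton _ _ _
        · rw [occ_cons, occ_pair_singleton]
          simp [pair_prefix_iff]
      rw [h2]
      simp

/-- head value of `(phi k)^[m] [j]` for `j ≤ k-1`. -/
def hdA (k j m : ℕ) : ℕ := if m = 0 then j else if j = k - 1 then k else 0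

lemma A_succ_lt (k j n : ℕ) (hk : 3 ≤ k) (hj : j < k - 1) :
    (phi k)^[n + 1] [j] = W k n ++ (phi k)^[n] [j + 1] := by
  rw [Function.iterate_succ_apply]
  have h1 : phi k [j] = phiLetter k j := by simp [phi]
  have h2 : phiLetter k j = [0, j + 1] := by
    unfold phiLetter
    rw [Nat.mod_eq_of_lt (by omega), if_neg (by omega), Nat.div_eq_of_lt (by omega), Nat.mul_zero]
  have h3 : ([0, j+1] : List ℕ) = [0] ++ [j+1] := rfl
  rw [h1, h2, h3, phi_iterate_append]
  rfl

lemma A_succ_top (k n : ℕ) (hk : 3 ≤ k) :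
    (phi k)^[n + 1] [k - 1] = shift k (W k n) := by
  rw [Function.iterate_succ_apply]
  have h1 : phi k [k - 1] = phiLetter k (k - 1) := by simp [phi]
  have h2 : phiLetter k (k - 1) = [k] := by
    unfold phiLetter
    rw [Nat.mod_eq_of_lt (by omega), if_pos rfl]
    congr 1
    omega
  have h3 : ([k] : List ℕ) = shift k [0] := by simp [shift]
  rw [h1, h2, h3, phi_iterate_shift k n (by omega)]
  rfl

lemma headA (k j m : ℕ) (hk : 3 ≤ k) (hj : j ≤ k - 1) :
    ((phi k)^[m] [j]).head? = some (hdA k j m) := by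
  cases m with
  | zero => simp [hdA]
  | succ m =>
      rcases Nat.lt_or_ge j (k - 1) with h | h
      · rw [A_succ_lt k j m hk h]
        obtain ⟨t, ht⟩ := W_head k hk m
        rw [ht]
        unfold hdA
        rw [if_neg (by omega), if_neg (by omega)]
        simp
      · have hj1 : j = k - 1 := le_antisymm hj h
        subst hj1
        rw [A_succ_top k m hk]
        obtain ⟨t, ht⟩ := W_head k hk m
        rw [ht, shift_cons]
        simp [hdA]

lemma getLast?_W (k n : ℕ) : (W k n).getLast? = some n := by
  obtain ⟨t, ht⟩ := W_last k n
  rw [ht, List.getLast?_concat]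

open Finset in
lemma unroll1 (k x y : ℕ) (hk : 3 ≤ k) :
    ∀ t, t ≤ k - 1 → ∀ n,
      occ [x, y] ((phi k)^[n + t] [k - 1 - t]) =
        (∑ s ∈ range t, occ [x, y] (W k (n + s))) +
          occ [x, y] ((phi k)^[n] [k - 1]) +
          ∑ s ∈ range t, (if n + s = x ∧ hdA k (k - 1 - s) (n + s) = y then 1 else 0) := by
  intro t
  induction t with
  | zero => intro _ n; simp
  | succ t ih =>
      intro ht n
      have h1 : k - 1 - (t + 1) < k - 1 := by omega
      have h2 : k - 1 - (t + 1) + 1 = k - 1 - t := by omega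
      have h3 : n + (t + 1) = (n + t) + 1 := by omega
      rw [h3, A_succ_lt k _ (n + t) hk h1, h2, occ_append, ih (by omega) n, getLast?_W,
        headA k _ _ hk (by omega)]
      rw [sum_range_succ, sum_range_succ]
      simp only [Option.some.injEq]
      ring

open Finset in
lemma unroll2 (k x y : ℕ) (hk : 3 ≤ k) :
    ∀ t j, j + t ≤ k - 1 →
      occ [x, y] ((phi k)^[t] [j]) =
        (∑ s ∈ range t, occ [x, y] (W k s)) +
          ∑ s ∈ range t, (if s = x ∧ hdA k (j + (t - s)) s = y then 1 else 0) := by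
  intro t
  induction t with
  | zero => intro j _; simpa using occ_pair_singleton x y j
  | succ t ih =>
      intro j hj
      have h1 : j < k - 1 := by omega
      rw [A_succ_lt k j t hk h1, occ_append, ih (j + 1) (by omega), getLast?_W,
        headA k _ _ hk (by omega)]
      rw [sum_range_succ, sum_range_succ]
      have h2 : ∀ s ∈ range t, (if s = x ∧ hdA k (j + 1 + (t - s)) s = y then 1 else 0)
          = (if s = x ∧ hdA k (j + (t + 1 - s)) s = y then 1 else 0) := by
        intro s hs
        rw [mem_range] at hs
        have : j + 1 + (t - s) = j + (t + 1 - s) := by omega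
        rw [this]
      rw [sum_congr rfl h2]
      have h3 : j + (t + 1 - t) = j + 1 := by omega
      rw [h3]
      simp only [Option.some.injEq]
      ring

open Finset

lemma helper_sum_indicator (t c : ℕ) :
    (∑ s ∈ range t, if s = c then (1:ℕ) else 0) = if c < t then 1 else 0 := by
  rw [Finset.sum_ite_eq' (range t)]
  simp

lemma helper_sum_shift (t n : ℕ) (f : ℕ → ℕ) :
    (∑ j ∈ Icc 1 t, if j ≤ n + t then f (n + t - j) else 0) = ∑ s ∈ range t, f (n + s) := by
  have h1 : (∑ j ∈ Icc 1 t, if j ≤ n + t then f (n + t - j) else 0)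
      = ∑ j ∈ Icc 1 t, f (n + t - j) := by
    refine sum_congr rfl fun j hj => ?_
    rw [mem_Icc] at hj
    rw [if_pos (by omega)]
  rw [h1, ← Finset.Ico_add_one_right_eq_Icc, Finset.sum_Ico_eq_sum_range, Nat.add_sub_cancel,
    ← Finset.sum_range_reflect (fun s => f (n + s)) t]
  refine sum_congr rfl fun i hi => ?_
  rw [mem_range] at hi
  congr 1
  omega

lemma helper_sum_small (t N : ℕ) (hN : N ≤ t) (f : ℕ → ℕ) :
    (∑ j ∈ Icc 1 t, if j ≤ N then f (N - j) else 0) = ∑ s ∈ range N, f s := by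
  rw [← Finset.sum_subset (Finset.Icc_subset_Icc_right hN)
    (fun j hj hj2 => by rw [mem_Icc] at *; rw [if_neg (by omega)])]
  have h1 : (∑ j ∈ Icc 1 N, if j ≤ N then f (N - j) else 0) = ∑ j ∈ Icc 1 N, f (N - j) := by
    refine sum_congr rfl fun j hj => ?_
    rw [mem_Icc] at hj
    rw [if_pos (by omega)]
  rw [h1, ← Finset.Ico_add_one_right_eq_Icc, Finset.sum_Ico_eq_sum_range, Nat.add_sub_cancel,
    ← Finset.sum_range_reflect (fun s => f s) N]
  refine sum_congr rfl fun i hi => ?_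
  rw [mem_range] at hi
  congr 1
  omega

lemma occ_shift_right_lt (k x y : ℕ) (w : List ℕ) (hy : y < k) :
    occ [x, y] (shift k w) = 0 := by
  induction w with
  | nil => simp [shift, occ_nil]
  | cons c w ih =>
      rw [shift_cons, occ_cons, ih]
      have : ¬ ([x, y] <+: (c + k) :: shift k w) := by
        rw [pair_prefix_iff, head?_shift]
        rintro ⟨-, h⟩
        cases w with
        | nil => simp at h
        | cons d t => simp at h; omega
      simp [this]

lemma occ00_W (k n : ℕ) : occ [0, 0] (W k n) = 0 := by
  cases n with
  | zero => exact occ_pair_singleton 0 0 0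
  | succ n => rw [W_succ]; exact occ00_phi k _

/-- tail value for family D -/
lemma tailD (k b n : ℕ) (hk : 3 ≤ k) : occ [b, 0] ((phi k)^[n] [k - 1]) = 0 := by
  cases n with
  | zero => exact occ_pair_singleton _ _ _
  | succ n =>
      rw [A_succ_top k n hk]
      exact occ_shift_right_lt k b 0 _ (by omega)

lemma recD (k b : ℕ) (hk : 3 ≤ k) (hb : 1 ≤ b) (N : ℕ) :
    occ [b, 0] (W k N) =
      (∑ j ∈ Icc 1 (k - 1), if j ≤ N then occ [b, 0] (W k (N - j)) else 0) +
        (if b + 1 ≤ N ∧ N ≤ b + k - 2 then 1 else 0) := by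
  rcases le_or_gt (k - 1) N with hN | hN
  · -- large case via unroll1
    obtain ⟨n, rfl⟩ : ∃ n, N = n + (k - 1) := ⟨N - (k - 1), by omega⟩
    have h := unroll1 k b 0 hk (k - 1) le_rfl n
    rw [Nat.sub_self] at h
    have hW : (phi k)^[n + (k - 1)] [0] = W k (n + (k - 1)) := rfl
    rw [hW, tailD k b n hk] at h
    have hj : ∀ s ∈ range (k - 1),
        (if n + s = b ∧ hdA k (k - 1 - s) (n + s) = 0 then 1 else 0)
          = if s = b - n ∧ n + 1 ≤ b then (1:ℕ) else 0 := by
      intro s hs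
      rw [mem_range] at hs
      unfold hdA
      split_ifs <;> omega
    rw [sum_congr rfl hj] at h
    by_cases hc : n + 1 ≤ b
    · have hj2 : ∀ s ∈ range (k-1), (if s = b - n ∧ n + 1 ≤ b then (1:ℕ) else 0)
          = if s = b - n then 1 else 0 := by
        intro s _; simp [hc]
      rw [sum_congr rfl hj2, helper_sum_indicator] at h
      rw [h, helper_sum_shift (k - 1) n (fun m => occ [b, 0] (W k m))]
      congr 1
      by_cases h2 : b - n < k - 1
      · rw [if_pos h2, if_pos (by omega)]
      · rw [if_neg h2, if_neg (by omega)]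
    · have hj2 : ∀ s ∈ range (k-1), (if s = b - n ∧ n + 1 ≤ b then (1:ℕ) else 0) = 0 := by
        intro s _; simp; omega
      rw [sum_congr rfl hj2] at h
      simp only [Finset.sum_const_zero] at h
      rw [h, helper_sum_shift (k - 1) n (fun m => occ [b, 0] (W k m)), if_neg (by omega)]
      omega
  · -- small case via unroll2
    have h := unroll2 k b 0 hk N 0 (by omega)
    have hW : (phi k)^[N] [0] = W k N := rfl
    rw [hW] at h
    have hj : ∀ s ∈ range N,
        (if s = b ∧ hdA k (0 + (N - s)) s = 0 then 1 else 0) = if s = b then (1:ℕ) else 0 := by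
      intro s hs
      rw [mem_range] at hs
      unfold hdA
      split_ifs <;> omega
    rw [sum_congr rfl hj, helper_sum_indicator] at h
    rw [h, helper_sum_small (k - 1) N (by omega) (fun m => occ [b, 0] (W k m))]
    congr 1
    by_cases h2 : b < N
    · rw [if_pos h2, if_pos (by omega)]
    · rw [if_neg h2, if_neg (by omega)]

lemma tailC0 (k a n : ℕ) (hk : 3 ≤ k) (ha : 1 ≤ a) :
    occ [a, k] ((phi k)^[n] [k - 1]) =
      if k < a ∧ 1 ≤ n then occ [a - k, 0] (W k (n - 1)) else 0 := by
  cases n with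
  | zero => rw [if_neg (by omega)]; exact occ_pair_singleton _ _ _
  | succ n =>
      rw [A_succ_top k n hk]
      rcases lt_trichotomy a k with h | h | h
      · rw [if_neg (by omega)]
        exact occ_shift_left_lt k a k _ h
      · rw [if_neg (by omega), h]
        have h2 := occ_shift k 0 0 (W k n)
        rw [Nat.zero_add] at h2
        rw [h2, occ00_W]
      · rw [if_pos ⟨h, by omega⟩]
        have h2 := occ_shift k (a - k) 0 (W k n)
        rw [Nat.zero_add, show a - k + k = a by omega] at h2
        rw [h2, Nat.succ_sub_one]

lemma recC0 (k a : ℕ) (hk : 3 ≤ k) (ha : 1 ≤ a) (N : ℕ) :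
    occ [a, k] (W k N) =
      (∑ j ∈ Icc 1 (k - 1), if j ≤ N then occ [a, k] (W k (N - j)) else 0) +
        (if N = a + k - 1 then 1 else 0) +
        (if k < a ∧ k ≤ N then occ [a - k, 0] (W k (N - k)) else 0) := by
  rcases le_or_gt (k - 1) N with hN | hN
  · obtain ⟨n, rfl⟩ : ∃ n, N = n + (k - 1) := ⟨N - (k - 1), by omega⟩
    have h := unroll1 k a k hk (k - 1) le_rfl n
    rw [Nat.sub_self] at h
    have hW : (phi k)^[n + (k - 1)] [0] = W k (n + (k - 1)) := rfl
    rw [hW, tailC0 k a n hk ha] at h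
    have hj : ∀ s ∈ range (k - 1),
        (if n + s = a ∧ hdA k (k - 1 - s) (n + s) = k then 1 else 0)
          = if s = 0 ∧ n = a then (1:ℕ) else 0 := by
      intro s hs
      rw [mem_range] at hs
      unfold hdA
      split_ifs <;> omega
    rw [sum_congr rfl hj] at h
    have e5 : (if k < a ∧ 1 ≤ n then occ [a - k, 0] (W k (n - 1)) else 0)
        = (if k < a ∧ k ≤ n + (k - 1) then occ [a - k, 0] (W k (n + (k - 1) - k)) else 0) := by
      rw [show n - 1 = n + (k - 1) - k by omega]
      by_cases hc : k < a
      · by_cases hn : 1 ≤ n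
        · rw [if_pos ⟨hc, hn⟩, if_pos ⟨hc, by omega⟩]
        · rw [if_neg (by tauto), if_neg (by rintro ⟨h1, h2⟩; exact hn (by omega))]
      · rw [if_neg (by tauto), if_neg (by tauto)]
    by_cases hna : n = a
    · have hj2 : ∀ s ∈ range (k-1), (if s = 0 ∧ n = a then (1:ℕ) else 0)
          = if s = 0 then 1 else 0 := by intro s _; simp [hna]
      rw [sum_congr rfl hj2, helper_sum_indicator] at h
      rw [h, helper_sum_shift (k - 1) n (fun m => occ [a, k] (W k m)), e5,
        show (if (0:ℕ) < k - 1 then (1:ℕ) else 0) = 1 from if_pos (by omega),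
        show (if n + (k-1) = a + k - 1 then (1:ℕ) else 0) = 1 from if_pos (by omega)]
      ring
    · have hj2 : ∀ s ∈ range (k-1), (if s = 0 ∧ n = a then (1:ℕ) else 0) = 0 := by
        intro s _; simp [hna]
      rw [sum_congr rfl hj2, Finset.sum_const_zero] at h
      rw [h, helper_sum_shift (k - 1) n (fun m => occ [a, k] (W k m)), e5,
        show (if n + (k-1) = a + k - 1 then (1:ℕ) else 0) = 0 from if_neg (by omega)]
      ring
  · have h := unroll2 k a k hk N 0 (by omega)
    have hW : (phi k)^[N] [0] = W k N := rfl
    rw [hW] at h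
    have hj : ∀ s ∈ range N,
        (if s = a ∧ hdA k (0 + (N - s)) s = k then 1 else 0) = 0 := by
      intro s hs
      rw [mem_range] at hs
      unfold hdA
      split_ifs <;> omega
    rw [sum_congr rfl hj, Finset.sum_const_zero] at h
    rw [h, helper_sum_small (k - 1) N (by omega) (fun m => occ [a, k] (W k m)),
      if_neg (by omega), if_neg (by omega)]
    omega

lemma tailCi (k a i n : ℕ) (hk : 3 ≤ k) :
    occ [a + k * (i + 1), k + k * (i + 1)] ((phi k)^[n] [k - 1]) =
      if 1 ≤ n then occ [a + k * i, k + k * i] (W k (n - 1)) else 0 := by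
  cases n with
  | zero => rw [if_neg (by omega)]; exact occ_pair_singleton _ _ _
  | succ n =>
      rw [if_pos (by omega), A_succ_top k n hk, Nat.succ_sub_one]
      have h2 := occ_shift k (a + k * i) (k + k * i) (W k n)
      rw [show a + k * i + k = a + k * (i + 1) by ring,
        show k + k * i + k = k + k * (i + 1) by ring] at h2
      exact h2

lemma recCi (k a i : ℕ) (hk : 3 ≤ k) (N : ℕ) :
    occ [a + k * (i + 1), k + k * (i + 1)] (W k N) =
      (∑ j ∈ Icc 1 (k - 1),
        if j ≤ N then occ [a + k * (i + 1), k + k * (i + 1)] (W k (N - j)) else 0) +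
        (if k ≤ N then occ [a + k * i, k + k * i] (W k (N - k)) else 0) := by
  have hki : k ≤ k * (i + 1) := Nat.le_mul_of_pos_right k (by omega)
  rcases le_or_gt (k - 1) N with hN | hN
  · obtain ⟨n, rfl⟩ : ∃ n, N = n + (k - 1) := ⟨N - (k - 1), by omega⟩
    have h := unroll1 k (a + k * (i + 1)) (k + k * (i + 1)) hk (k - 1) le_rfl n
    rw [Nat.sub_self] at h
    have hW : (phi k)^[n + (k - 1)] [0] = W k (n + (k - 1)) := rfl
    rw [hW, tailCi k a i n hk] at h
    have hj : ∀ s ∈ range (k - 1),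
        (if n + s = a + k * (i + 1) ∧ hdA k (k - 1 - s) (n + s) = k + k * (i + 1)
          then 1 else 0) = 0 := by
      intro s hs
      rw [mem_range] at hs
      unfold hdA
      split_ifs <;> omega
    rw [sum_congr rfl hj, Finset.sum_const_zero] at h
    have e5 : (if 1 ≤ n then occ [a + k * i, k + k * i] (W k (n - 1)) else 0)
        = (if k ≤ n + (k - 1) then occ [a + k * i, k + k * i] (W k (n + (k - 1) - k)) else 0) := by
      rw [show n - 1 = n + (k - 1) - k by omega]
      by_cases hn : 1 ≤ n
      · rw [if_pos hn, if_pos (by omega)]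
      · rw [if_neg hn, if_neg (by omega)]
    rw [h, e5, helper_sum_shift (k - 1) n
      (fun m => occ [a + k * (i + 1), k + k * (i + 1)] (W k m))]
    ring
  · have h := unroll2 k (a + k * (i + 1)) (k + k * (i + 1)) hk N 0 (by omega)
    have hW : (phi k)^[N] [0] = W k N := rfl
    rw [hW] at h
    have hj : ∀ s ∈ range N,
        (if s = a + k * (i + 1) ∧ hdA k (0 + (N - s)) s = k + k * (i + 1) then 1 else 0)
          = 0 := by
      intro s hs
      rw [mem_range] at hs
      unfold hdA
      split_ifs <;> omega
    rw [sum_congr rfl hj, Finset.sum_const_zero] at h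
    rw [h, helper_sum_small (k - 1) N (by omega)
      (fun m => occ [a + k * (i + 1), k + k * (i + 1)] (W k m)), if_neg (by omega)]

/-- `C k B = C_B^{(k)}(y) = Σ_{n≥0} |W_n^{(k)}|_B yⁿ` as a formal power series over ℚ. -/
noncomputable def C (k : ℕ) (B : List ℕ) : PowerSeries ℚ :=
  PowerSeries.mk (fun n => (occ B (W k n) : ℚ))

/-- `Hgf r = H_r(y)`, the multiplicative inverse of `1 - y - y² - ⋯ - y^r`. -/
noncomputable def Hgf (r : ℕ) : PowerSeries ℚ :=
  (1 - ∑ j ∈ Finset.Icc 1 r, (PowerSeries.X : PowerSeries ℚ) ^ j)⁻¹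

/-- `Ggf r = G_r(y) = (1 - y^r)·H_r(y) - 1`. -/
noncomputable def Ggf (r : ℕ) : PowerSeries ℚ :=
  (1 - (PowerSeries.X : PowerSeries ℚ) ^ r) * Hgf r - 1

/-- The set `B^{(k)} = B_1^{(k)} ∪ B_2^{(k)} ∪ B_3^{(k)}` of length-2 words. -/
def Bset (k : ℕ) : Set (List ℕ) :=
  {U | (∃ i a : ℕ, 1 ≤ a ∧ U = [a + k * i, k + k * i]) ∨
       (∃ i b : ℕ, 1 ≤ b ∧ b ≤ k - 1 ∧ U = [k * i, b + k * i]) ∨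
       (∃ a : ℕ, 1 ≤ a ∧ U = [a, 0])}

/-- The list of blocks in the decomposition of `W_n^{(k)}` for `n ≥ k`:
`W_{n-1}, …, W_{n-k+1}, k ⊕ W_{n-k}`. -/
def blocks (k n : ℕ) : List (List ℕ) :=
  (List.range (k - 1)).map (fun j => W k (n - 1 - j)) ++ [shift k (W k (n - k))]


open PowerSeries

/-- generic translation of a recurrence into a power series identity -/
lemma ps_rec (k : ℕ) (f r : ℕ → ℕ)
    (hrec : ∀ N, f N = (∑ j ∈ Icc 1 (k - 1), if j ≤ N then f (N - j) else 0) + r N) :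
    (PowerSeries.mk (fun n => (f n : ℚ))) *
        (1 - ∑ j ∈ Icc 1 (k - 1), (PowerSeries.X : PowerSeries ℚ) ^ j) =
      PowerSeries.mk (fun n => (r n : ℚ)) := by
  ext N
  rw [mul_sub, mul_one, map_sub, Finset.mul_sum, map_sum]
  have h1 : ∀ j ∈ Icc 1 (k - 1),
      (PowerSeries.coeff N) (PowerSeries.mk (fun n => (f n : ℚ)) * PowerSeries.X ^ j)
        = if j ≤ N then (f (N - j) : ℚ) else 0 := by
    intro j _
    rw [PowerSeries.coeff_mul_X_pow']
    split_ifs <;> simp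
  rw [Finset.sum_congr rfl h1]
  simp only [PowerSeries.coeff_mk]
  have h2 := hrec N
  have h3 : ((∑ j ∈ Icc 1 (k - 1), if j ≤ N then f (N - j) else 0 : ℕ) : ℚ)
      = ∑ j ∈ Icc 1 (k - 1), if j ≤ N then (f (N - j) : ℚ) else 0 := by
    push_cast [apply_ite (Nat.cast : ℕ → ℚ)]
    rfl
  have h4 : (f N : ℚ) = ((∑ j ∈ Icc 1 (k - 1), if j ≤ N then f (N - j) else 0 : ℕ) : ℚ)
      + (r N : ℚ) := by exact_mod_cast congrArg (Nat.cast : ℕ → ℚ) h2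
  rw [h4, h3]
  ring

lemma mk_window (lo hi : ℕ) :
    PowerSeries.mk (fun n => (if lo ≤ n ∧ n ≤ hi then (1 : ℚ) else 0)) =
      ∑ j ∈ Icc lo hi, (PowerSeries.X : PowerSeries ℚ) ^ j := by
  ext N
  rw [map_sum]
  have h1 : ∀ j ∈ Icc lo hi, (PowerSeries.coeff N) ((PowerSeries.X : PowerSeries ℚ) ^ j)
      = if N = j then (1:ℚ) else 0 := fun j _ => PowerSeries.coeff_X_pow N j
  rw [Finset.sum_congr rfl h1, Finset.sum_ite_eq (Icc lo hi) N (fun _ => (1:ℚ))]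
  simp [mem_Icc]

lemma constCoeff_U (k : ℕ) (hk : 3 ≤ k) :
    PowerSeries.constantCoeff
      (1 - ∑ j ∈ Icc 1 (k - 1), (PowerSeries.X : PowerSeries ℚ) ^ j) ≠ 0 := by
  rw [map_sub, map_one, map_sum]
  have h1 : ∀ j ∈ Icc 1 (k - 1),
      PowerSeries.constantCoeff ((PowerSeries.X : PowerSeries ℚ) ^ j) = 0 := by
    intro j hj
    rw [mem_Icc] at hj
    rw [← PowerSeries.coeff_zero_eq_constantCoeff, PowerSeries.coeff_X_pow]
    rw [if_neg (by omega)]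
  rw [Finset.sum_congr rfl h1]
  simp

lemma U_mul_H (k : ℕ) (hk : 3 ≤ k) :
    (1 - ∑ j ∈ Icc 1 (k - 1), (PowerSeries.X : PowerSeries ℚ) ^ j) * Hgf (k - 1) = 1 := by
  exact PowerSeries.mul_inv_cancel _ (constCoeff_U k hk)

lemma solveU (k : ℕ) (hk : 3 ≤ k) (F R : PowerSeries ℚ)
    (h : F * (1 - ∑ j ∈ Icc 1 (k - 1), (PowerSeries.X : PowerSeries ℚ) ^ j) = R) :
    F = R * Hgf (k - 1) := by
  calc F = F * ((1 - ∑ j ∈ Icc 1 (k - 1), (PowerSeries.X : PowerSeries ℚ) ^ j)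
            * Hgf (k - 1)) := by rw [U_mul_H k hk, mul_one]
    _ = (F * (1 - ∑ j ∈ Icc 1 (k - 1), (PowerSeries.X : PowerSeries ℚ) ^ j))
            * Hgf (k - 1) := by ring
    _ = R * Hgf (k - 1) := by rw [h]

lemma PD (k b : ℕ) (hk : 3 ≤ k) (hb : 1 ≤ b) :
    C k [b, 0] = (∑ j ∈ Icc (b + 1) (b + k - 2), (PowerSeries.X : PowerSeries ℚ) ^ j)
      * Hgf (k - 1) := by
  apply solveU k hk
  have h := ps_rec k (fun n => occ [b, 0] (W k n))
    (fun n => if b + 1 ≤ n ∧ n ≤ b + k - 2 then 1 else 0) (recD k b hk hb)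
  have hC : C k [b, 0] = PowerSeries.mk (fun n => ((occ [b, 0] (W k n) : ℕ) : ℚ)) := rfl
  rw [hC, h]
  refine PowerSeries.ext fun N => ?_
  simp only [PowerSeries.coeff_mk, map_sum]
  rw [Finset.sum_congr rfl (fun j _ => PowerSeries.coeff_X_pow N j),
    Finset.sum_ite_eq (Icc (b + 1) (b + k - 2)) N (fun _ => (1 : ℚ))]
  simp only [mem_Icc]
  split_ifs <;> simp

lemma PC0 (k a : ℕ) (hk : 3 ≤ k) (ha : 1 ≤ a) :
    C k [a, k] = ((PowerSeries.X : PowerSeries ℚ) ^ (a + k - 1) +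
      (if k < a then C k [a - k, 0] * (PowerSeries.X : PowerSeries ℚ) ^ k else 0))
        * Hgf (k - 1) := by
  apply solveU k hk
  have h := ps_rec k (fun n => occ [a, k] (W k n))
    (fun n => (if n = a + k - 1 then 1 else 0) +
      (if k < a ∧ k ≤ n then occ [a - k, 0] (W k (n - k)) else 0))
    (fun N => by beta_reduce; rw [recC0 k a hk ha N, add_assoc])
  have hC : C k [a, k] = PowerSeries.mk (fun n => ((occ [a, k] (W k n) : ℕ) : ℚ)) := rfl
  rw [hC, h]
  refine PowerSeries.ext fun N => ?_
  simp only [PowerSeries.coeff_mk]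
  rw [map_add, PowerSeries.coeff_X_pow]
  have h2 : (PowerSeries.coeff N)
      (if k < a then C k [a - k, 0] * (PowerSeries.X : PowerSeries ℚ) ^ k else 0)
      = if k < a ∧ k ≤ N then ((occ [a - k, 0] (W k (N - k)) : ℕ) : ℚ) else 0 := by
    by_cases hka : k < a
    · rw [if_pos hka, PowerSeries.coeff_mul_X_pow']
      by_cases hkN : k ≤ N
      · rw [if_pos hkN, if_pos ⟨hka, hkN⟩,
          show C k [a - k, 0] = PowerSeries.mk (fun n => ((occ [a - k, 0] (W k n) : ℕ) : ℚ))
            from rfl]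
        simp only [PowerSeries.coeff_mk]
      · rw [if_neg hkN, if_neg (by tauto)]
    · rw [if_neg hka, if_neg (by tauto), map_zero]
  rw [h2]
  push_cast [apply_ite (Nat.cast : ℕ → ℚ)]
  ring

lemma PCi (k a i : ℕ) (hk : 3 ≤ k) :
    C k [a + k * (i + 1), k + k * (i + 1)] =
      C k [a + k * i, k + k * i] * (PowerSeries.X : PowerSeries ℚ) ^ k * Hgf (k - 1) := by
  apply solveU k hk
  have h := ps_rec k (fun n => occ [a + k * (i + 1), k + k * (i + 1)] (W k n))
    (fun n => if k ≤ n then occ [a + k * i, k + k * i] (W k (n - k)) else 0)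
    (recCi k a i hk)
  have hC : C k [a + k * (i + 1), k + k * (i + 1)] =
      PowerSeries.mk (fun n => ((occ [a + k * (i + 1), k + k * (i + 1)] (W k n) : ℕ) : ℚ)) := rfl
  rw [hC, h]
  refine PowerSeries.ext fun N => ?_
  simp only [PowerSeries.coeff_mk]
  rw [PowerSeries.coeff_mul_X_pow',
    show C k [a + k * i, k + k * i]
      = PowerSeries.mk (fun n => ((occ [a + k * i, k + k * i] (W k n) : ℕ) : ℚ)) from rfl]
  simp only [PowerSeries.coeff_mk]
  push_cast [apply_ite (Nat.cast : ℕ → ℚ)]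
  rfl

lemma claim2 (k : ℕ) (hk : 3 ≤ k) :
    Ggf (k - 1) = (∑ j ∈ Icc 1 (k - 2), (PowerSeries.X : PowerSeries ℚ) ^ j)
      * Hgf (k - 1) := by
  have hsplit : (∑ j ∈ Icc 1 (k - 1), (PowerSeries.X : PowerSeries ℚ) ^ j)
      = (PowerSeries.X : PowerSeries ℚ) ^ (k - 1) +
        ∑ j ∈ Icc 1 (k - 2), (PowerSeries.X : PowerSeries ℚ) ^ j := by
    rw [show k - 1 = (k - 2) + 1 by omega,
      ← Finset.insert_Icc_right_eq_Icc_add_one (by omega), Finset.sum_insert (by simp [mem_Icc])]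
  have hU := U_mul_H k hk
  rw [hsplit] at hU
  unfold Ggf
  linear_combination hU

lemma claim1 (k a : ℕ) (hk : 3 ≤ k) (hka : k < a) :
    (∑ j ∈ Icc (a - k + 1) (a - k + k - 2), (PowerSeries.X : PowerSeries ℚ) ^ j)
        * (PowerSeries.X : PowerSeries ℚ) ^ k =
      (PowerSeries.X : PowerSeries ℚ) ^ a *
        ∑ j ∈ Icc 1 (k - 2), (PowerSeries.X : PowerSeries ℚ) ^ j := by
  rw [show Icc (a - k + 1) (a - k + k - 2) = Icc (1 + (a - k)) ((k - 2) + (a - k)) by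
      congr 1 <;> omega,
    ← Finset.map_add_right_Icc, Finset.sum_map, Finset.sum_mul, Finset.mul_sum]
  refine Finset.sum_congr rfl fun j hj => ?_
  rw [mem_Icc] at hj
  rw [addRightEmbedding_apply, ← pow_add, ← pow_add]
  congr 1
  omega

theorem stmt17 (k a i : ℕ) (hk : 3 ≤ k) (ha : 1 ≤ a) :
    C k [a + k * i, k + k * i] =
      PowerSeries.X ^ (a + k * i) * Hgf (k - 1) ^ (i + 1) *
        (PowerSeries.X ^ (k - 1) + (if k < a then Ggf (k - 1) else 0)) := by
  induction i with
  | zero =>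
      simp only [Nat.mul_zero, Nat.add_zero, pow_one, zero_add]
      by_cases hka : k < a
      · rw [PC0 k a hk ha, if_pos hka, if_pos hka, PD k (a - k) hk (by omega), claim2 k hk,
          show a + k - 1 = a + (k - 1) by omega, pow_add]
        linear_combination (Hgf (k - 1) * Hgf (k - 1)) * claim1 k a hk hka
      · rw [PC0 k a hk ha, if_neg hka, if_neg hka, add_zero, add_zero,
          show a + k - 1 = a + (k - 1) by omega, pow_add]
        ring
  | succ i ih =>
      rw [PCi k a i hk, ih, show a + k * (i + 1) = (a + k * i) + k by ring, pow_add,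
        pow_succ]
      ring
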